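/- In the Fomin–Kirillov setting: let n ∈ ℕ, G = S_n, and V the Yetter–Drinfeld module over kS_n with basis v_{ij} (1 ≤ i < j ≤ n), v_{ji} = −v_{ij}, coaction δ(v_{ij}) = (i j) ⊗ v_{ij}, and action σ·v_{ij} = v_{σ(i)σ(j)}. Then the elements v_{ij}², v_{ij}v_{jk} + v_{jk}v_{ki} + v_{ki}v_{ij} (for distinct i,j,k), and v_{ij}v_{kl} − v_{kl}v_{ij} (for distinct i,j,k,l) are primitive elements of the braided Hopf algebra T(V). -/
import Mathlib


open TensorProduct LinearMap

universe u
set_option maxHeartbeats 1000000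

section Prelude

variable (k : Type u) [Field k]

/-- A left comodule structure map over a coalgebra-like datum `(Δ, ε)` on `C`. -/
structure IsComod {C V : Type u} [AddCommGroup C] [Module k C]
    [AddCommGroup V] [Module k V]
    (ρ : V →ₗ[k] C ⊗[k] V) (Δ : C →ₗ[k] C ⊗[k] C) (ε : C →ₗ[k] k) : Prop where
  counit : (TensorProduct.lid k V).toLinearMap ∘ₗ ε.rTensor V ∘ₗ ρ = LinearMap.id
  coassoc : Δ.rTensor V ∘ₗ ρ
      = (TensorProduct.assoc k C C V).symm.toLinearMap ∘ₗ ρ.lTensor C ∘ₗ ρ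

/-- A right comodule structure map. -/
structure IsRightComod {C V : Type u} [AddCommGroup C] [Module k C]
    [AddCommGroup V] [Module k V]
    (ρ : V →ₗ[k] V ⊗[k] C) (Δ : C →ₗ[k] C ⊗[k] C) (ε : C →ₗ[k] k) : Prop where
  counit : (TensorProduct.rid k V).toLinearMap ∘ₗ ε.lTensor V ∘ₗ ρ = LinearMap.id
  coassoc : Δ.lTensor V ∘ₗ ρ
      = (TensorProduct.assoc k V C C).toLinearMap ∘ₗ ρ.rTensor C ∘ₗ ρ

/-- A right module structure map over an algebra-like datum `(μ, 1)` on `B`. -/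
structure IsRightMod {B V : Type u} [AddCommGroup B] [Module k B]
    [AddCommGroup V] [Module k V]
    (σ : V ⊗[k] B →ₗ[k] V) (μ : B ⊗[k] B →ₗ[k] B) (oneB : B) : Prop where
  act_one : ∀ v : V, σ (v ⊗ₜ oneB) = v
  act_assoc : σ ∘ₗ σ.rTensor B
      = σ ∘ₗ μ.lTensor V ∘ₗ (TensorProduct.assoc k V B B).toLinearMap

/-- Diagonal left `H`-coaction on a tensor product of two `H`-comodules. -/
noncomputable def diagCoact {H V W : Type u} [Ring H] [Algebra k H]
    [AddCommGroup V] [Module k V] [AddCommGroup W] [Module k W]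
    (ρV : V →ₗ[k] H ⊗[k] V) (ρW : W →ₗ[k] H ⊗[k] W) :
    V ⊗[k] W →ₗ[k] H ⊗[k] (V ⊗[k] W) :=
  (LinearMap.mul' k H).rTensor (V ⊗[k] W)
    ∘ₗ (tensorTensorTensorComm k H V H W).toLinearMap ∘ₗ map ρV ρW

/-- A braided Hopf algebra `A` in the Yetter–Drinfeld category over the Hopf algebra `H`,
with all structure maps given explicitly as linear maps. -/
structure BHA (H : Type u) [Ring H] [HopfAlgebra k H]
    (A : Type u) [AddCommGroup A] [Module k A] where
  mul : A ⊗[k] A →ₗ[k] A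
  one : A
  comul : A →ₗ[k] A ⊗[k] A
  counit : A →ₗ[k] k
  antipode : A →ₗ[k] A
  coact : A →ₗ[k] H ⊗[k] A
  act : H ⊗[k] A →ₗ[k] A
  -- algebra axioms
  mul_assoc' : mul ∘ₗ mul.rTensor A
      = mul ∘ₗ mul.lTensor A ∘ₗ (TensorProduct.assoc k A A A).toLinearMap
  one_mul' : ∀ a : A, mul (one ⊗ₜ a) = a
  mul_one' : ∀ a : A, mul (a ⊗ₜ one) = a
  -- coalgebra axioms
  isCoalg : IsComod k comul comul counit  -- encodes coassociativity and left counit axiom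
  comul_counit : (TensorProduct.rid k A).toLinearMap ∘ₗ counit.lTensor A ∘ₗ comul
      = LinearMap.id
  -- `H`-comodule axioms
  isComodH : IsComod k coact (Coalgebra.comul (R := k) (A := H)) (Coalgebra.counit (R := k) (A := H))
  -- `H`-module axioms
  act_one' : ∀ a : A, act ((1 : H) ⊗ₜ a) = a
  act_mul' : ∀ (g h : H) (a : A), act ((g * h) ⊗ₜ a) = act (g ⊗ₜ act (h ⊗ₜ a))
  -- `A` is an `H`-module algebra
  act_alg : act ∘ₗ mul.lTensor H
      = mul ∘ₗ map act act ∘ₗ (tensorTensorTensorComm k H H A A).toLinearMap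
          ∘ₗ (Coalgebra.comul (R := k) (A := H)).rTensor (A ⊗[k] A)
  act_unit : ∀ h : H, act (h ⊗ₜ one) = Coalgebra.counit (R := k) h • one
  -- `A` is an `H`-comodule algebra
  coact_mul : coact ∘ₗ mul = mul.lTensor H ∘ₗ diagCoact k coact coact
  coact_one : coact one = 1 ⊗ₜ one
  -- Yetter–Drinfeld compatibility: h⁽¹⁾a₍₋₁₎ ⊗ h⁽²⁾·a₍₀₎ = (h⁽¹⁾·a)₍₋₁₎h⁽²⁾ ⊗ (h⁽¹⁾·a)₍₀₎
  yd : map (LinearMap.mul' k H) act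
        ∘ₗ (tensorTensorTensorComm k H H H A).toLinearMap
        ∘ₗ coact.lTensor (H ⊗[k] H)
        ∘ₗ (Coalgebra.comul (R := k) (A := H)).rTensor A
      = (LinearMap.mul' k H).rTensor A
        ∘ₗ (TensorProduct.assoc k H H A).symm.toLinearMap
        ∘ₗ (TensorProduct.comm k A H).toLinearMap.lTensor H
        ∘ₗ (TensorProduct.assoc k H A H).toLinearMap
        ∘ₗ (coact ∘ₗ act).rTensor H
        ∘ₗ (TensorProduct.assoc k H A H).symm.toLinearMap
        ∘ₗ (TensorProduct.comm k H A).toLinearMap.lTensor H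
        ∘ₗ (TensorProduct.assoc k H H A).toLinearMap
        ∘ₗ (Coalgebra.comul (R := k) (A := H)).rTensor A
  -- the braiding of the Yetter–Drinfeld category on `A ⊗ A`
  braid : A ⊗[k] A →ₗ[k] A ⊗[k] A
  braid_def : braid = act.rTensor A
      ∘ₗ (TensorProduct.assoc k H A A).symm.toLinearMap
      ∘ₗ (TensorProduct.comm k A A).toLinearMap.lTensor H
      ∘ₗ (TensorProduct.assoc k H A A).toLinearMap
      ∘ₗ coact.rTensor A
  -- the braided algebra structure on `A ⊗ A`
  mulAA : (A ⊗[k] A) ⊗[k] (A ⊗[k] A) →ₗ[k] A ⊗[k] A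
  mulAA_def : mulAA = map mul mul
      ∘ₗ (TensorProduct.assoc k A A (A ⊗[k] A)).symm.toLinearMap
      ∘ₗ ((TensorProduct.assoc k A A A).toLinearMap
            ∘ₗ braid.rTensor A
            ∘ₗ (TensorProduct.assoc k A A A).symm.toLinearMap).lTensor A
      ∘ₗ (TensorProduct.assoc k A A (A ⊗[k] A)).toLinearMap
  -- braided bialgebra axioms
  comul_mul : comul ∘ₗ mul = mulAA ∘ₗ map comul comul
  counit_mul : ∀ x y : A, counit (mul (x ⊗ₜ y)) = counit x * counit y
  comul_one : comul one = one ⊗ₜ one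
  counit_one : counit one = 1
  -- antipode axioms
  antipode_left : ∀ a : A, mul (antipode.rTensor A (comul a)) = counit a • one
  antipode_right : ∀ a : A, mul (antipode.lTensor A (comul a)) = counit a • one
  -- the comultiplication and counit of `A` are `H`-colinear
  comul_colinear : diagCoact k coact coact ∘ₗ comul = comul.lTensor H ∘ₗ coact
  counit_colinear : ∀ a : A, counit.lTensor H (coact a) = counit a • ((1 : H) ⊗ₜ (1 : k))

namespace BHA

variable {k} {H A : Type u} [Ring H] [HopfAlgebra k H]
  [AddCommGroup A] [Module k A]

/-- Group-like elements of `A`. -/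
def IsGroupLike (S : BHA k H A) (g : A) : Prop :=
  S.comul g = g ⊗ₜ g ∧ S.counit g = 1

/-- `C` is a subcoalgebra of `A`. -/
def IsSubcoalgebra (S : BHA k H A) (C : Submodule k A) : Prop :=
  ∀ c ∈ C, S.comul c ∈ LinearMap.range (map C.subtype C.subtype)

/-- `C` is a simple subcoalgebra of `A`. -/
def IsSimpleSubcoalgebra (S : BHA k H A) (C : Submodule k A) : Prop :=
  S.IsSubcoalgebra C ∧ C ≠ ⊥ ∧
    ∀ D : Submodule k A, S.IsSubcoalgebra D → D ≤ C → D ≠ ⊥ → D = C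

/-- `A` is pointed: all its simple subcoalgebras are one-dimensional. -/
def IsPointed (S : BHA k H A) : Prop :=
  ∀ C : Submodule k A, S.IsSimpleSubcoalgebra C → Module.finrank k C = 1

/-- `K` is a left coideal subalgebra of `A` in the category of left `H`-comodules. -/
def IsLeftCoidealSubalgebra (S : BHA k H A) (K : Submodule k A) : Prop :=
  S.one ∈ K ∧ (∀ x ∈ K, ∀ y ∈ K, S.mul (x ⊗ₜ y) ∈ K) ∧
    (∀ x ∈ K, S.comul x ∈ LinearMap.range (K.subtype.lTensor A)) ∧
    (∀ x ∈ K, S.coact x ∈ LinearMap.range (K.subtype.lTensor H))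

end BHA

end Prelude
section Prelude2

variable (k : Type u) [Field k]

/-- `W` is a subcomodule for the coaction `ρ`. -/
def IsSubcomod {C V : Type u} [AddCommGroup C] [Module k C] [AddCommGroup V] [Module k V]
    (ρ : V →ₗ[k] C ⊗[k] V) (W : Submodule k V) : Prop :=
  ∀ w ∈ W, ρ w ∈ LinearMap.range (W.subtype.lTensor C)

/-- A coalgebra-datum `(Δ, ε)` is cosemisimple if every subcomodule of every comodule
admits a complementary subcomodule. -/
def CosemisimpleCoalg {C : Type u} [AddCommGroup C] [Module k C]
    (Δ : C →ₗ[k] C ⊗[k] C) (ε : C →ₗ[k] k) : Prop :=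
  ∀ (V : Type u) [AddCommGroup V] [Module k V] (ρ : V →ₗ[k] C ⊗[k] V),
    IsComod k ρ Δ ε → ∀ W : Submodule k V, IsSubcomod k ρ W →
      ∃ W' : Submodule k V, IsCompl W W' ∧ IsSubcomod k ρ W'

/-- The half-braided diagonal right action of `K'` on `A ⊗ X`:
`(a ⊗ x) · c = a (x₍₋₁₎ · c⁽¹⁾) ⊗ x₍₀₎ · c⁽²⁾`. -/
noncomputable def halfBraidedAction {H A X K' : Type u} [Ring H] [Algebra k H]
    [AddCommGroup A] [Module k A] [AddCommGroup X] [Module k X]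
    [AddCommGroup K'] [Module k K']
    (mulA : A ⊗[k] A →ₗ[k] A) (act : H ⊗[k] A →ₗ[k] A)
    (ρX : X →ₗ[k] H ⊗[k] X) (σX : X ⊗[k] K' →ₗ[k] X)
    (comulK : K' →ₗ[k] A ⊗[k] K') :
    (A ⊗[k] X) ⊗[k] K' →ₗ[k] A ⊗[k] X :=
  map (mulA ∘ₗ act.lTensor A ∘ₗ (TensorProduct.assoc k A H A).toLinearMap) σX
    ∘ₗ (tensorTensorTensorComm k (A ⊗[k] H) X A K').toLinearMap
    ∘ₗ ((TensorProduct.assoc k A H X).symm.toLinearMap ∘ₗ ρX.lTensor A).rTensor (A ⊗[k] K')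
    ∘ₗ comulK.lTensor (A ⊗[k] X)

/-- The half-braided diagonal left `A`-coaction on `U ⊗ K'`:
`u ⊗ c ↦ u⁽⁻¹⁾ (u⁽⁰⁾₍₋₁₎ · c⁽¹⁾) ⊗ u⁽⁰⁾₍₀₎ ⊗ c⁽²⁾`. -/
noncomputable def halfBraidedCoact {H A U K' : Type u} [Ring H] [Algebra k H]
    [AddCommGroup A] [Module k A] [AddCommGroup U] [Module k U]
    [AddCommGroup K'] [Module k K']
    (mulA : A ⊗[k] A →ₗ[k] A) (act : H ⊗[k] A →ₗ[k] A)
    (ρAU : U →ₗ[k] A ⊗[k] U) (ρHU : U →ₗ[k] H ⊗[k] U)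
    (comulK : K' →ₗ[k] A ⊗[k] K') :
    U ⊗[k] K' →ₗ[k] A ⊗[k] (U ⊗[k] K') :=
  map (mulA ∘ₗ act.lTensor A ∘ₗ (TensorProduct.assoc k A H A).toLinearMap) LinearMap.id
    ∘ₗ (tensorTensorTensorComm k (A ⊗[k] H) U A K').toLinearMap
    ∘ₗ ((TensorProduct.assoc k A H U).symm.toLinearMap ∘ₗ ρHU.lTensor A).rTensor (A ⊗[k] K')
    ∘ₗ map ρAU comulK

namespace BHA

variable {k} {H A : Type u} [Ring H] [HopfAlgebra k H] [AddCommGroup A] [Module k A]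

/-- `comulK` is the restriction of the comultiplication of `A` to the left coideal `K`. -/
def RestrictsComul (S : BHA k H A) (K : Submodule k A)
    (comulK : ↥K →ₗ[k] A ⊗[k] ↥K) : Prop :=
  K.subtype.lTensor A ∘ₗ comulK = S.comul ∘ₗ K.subtype

/-- `coactK` is the restriction of the `H`-coaction of `A` to `K`. -/
def RestrictsCoact (S : BHA k H A) (K : Submodule k A)
    (coactK : ↥K →ₗ[k] H ⊗[k] ↥K) : Prop :=
  K.subtype.lTensor H ∘ₗ coactK = S.coact ∘ₗ K.subtype

/-- `mulK` is the restriction of the multiplication of `A` to the subalgebra `K`. -/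
def RestrictsMul (S : BHA k H A) (K : Submodule k A)
    (mulK : ↥K ⊗[k] ↥K →ₗ[k] ↥K) : Prop :=
  K.subtype ∘ₗ mulK = S.mul ∘ₗ map K.subtype K.subtype

variable (S : BHA k H A) (K : Submodule k A)

/-- A (left-right) Hopf module in `^A(^H 𝓜)_K`: a left `H`-comodule `V` with a
left `A`-coaction and a right `K`-action, all `H`-colinear, such that the `A`-coaction
is right `K`-linear for the half-braided diagonal `K`-action on `A ⊗ V`. -/
structure IsHopfModule (mulK : ↥K ⊗[k] ↥K →ₗ[k] ↥K) (oneK : ↥K)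
    (comulK : ↥K →ₗ[k] A ⊗[k] ↥K) (coactK : ↥K →ₗ[k] H ⊗[k] ↥K)
    {V : Type u} [AddCommGroup V] [Module k V]
    (ρH : V →ₗ[k] H ⊗[k] V) (ρA : V →ₗ[k] A ⊗[k] V)
    (σ : V ⊗[k] ↥K →ₗ[k] V) : Prop where
  comodH : IsComod k ρH (Coalgebra.comul (R := k) (A := H)) (Coalgebra.counit (R := k) (A := H))
  comodA : IsComod k ρA S.comul S.counit
  modK : IsRightMod k σ mulK oneK
  colinearA : diagCoact k S.coact ρH ∘ₗ ρA = ρA.lTensor H ∘ₗ ρH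
  colinearK : ρH ∘ₗ σ = σ.lTensor H ∘ₗ diagCoact k ρH coactK
  Klinear : ρA ∘ₗ σ = halfBraidedAction k S.mul S.act ρH σ comulK ∘ₗ ρA.rTensor ↥K

/-- `V` (with right `K`-action `σ` and `H`-coaction `ρH`) is `K`-free in the category of
left `H`-comodules: it is freely generated as a `K`-module by an `H`-subcomodule. -/
def IsKFree {V : Type u} [AddCommGroup V] [Module k V]
    (ρH : V →ₗ[k] H ⊗[k] V) (σ : V ⊗[k] ↥K →ₗ[k] V) : Prop :=
  ∃ X : Submodule k V, IsSubcomod k ρH X ∧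
    Function.Bijective (σ ∘ₗ X.subtype.rTensor ↥K)

end BHA

end Prelude2

/-- In the Fomin–Kirillov setting (`G = S_n`, `H = kS_n`, `V` the
Yetter–Drinfeld module with basis `v i j` (`i < j`), `v j i = -v i j`, coaction
`v i j ↦ (i j) ⊗ v i j` and action `σ • v i j = v (σ i) (σ j)`), the elements
`v i j * v i j`, `v i j * v j l + v j l * v l i + v l i * v i j` (for distinct
`i, j, l`) and `v i j * v l m - v l m * v i j` (for distinct `i, j, l, m`) are
primitive in the braided Hopf algebra `T(V)`. -/
theorem fominKirillov_relations_primitive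
    {k V H : Type u} [Field k] (n : ℕ)
    [AddCommGroup V] [Module k V] [Ring H] [HopfAlgebra k H]
    -- `H` is the group Hopf algebra of the symmetric group `S_n`:
    (e : Equiv.Perm (Fin n) →* H)
    (hind : LinearIndependent k (fun σ : Equiv.Perm (Fin n) => (e σ : H)))
    (hspan : Submodule.span k (Set.range fun σ : Equiv.Perm (Fin n) => (e σ : H)) = ⊤)
    (hΔH : ∀ σ : Equiv.Perm (Fin n), Coalgebra.comul (R := k) (e σ) = e σ ⊗ₜ e σ)
    (hεH : ∀ σ : Equiv.Perm (Fin n), Coalgebra.counit (R := k) (e σ) = (1 : k))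
    (hSH : ∀ σ : Equiv.Perm (Fin n), HopfAlgebra.antipode (R := k) (e σ) = e σ⁻¹)
    -- the transposition Yetter–Drinfeld module `V`:
    (v : Fin n → Fin n → V)
    (hanti : ∀ i j : Fin n, i ≠ j → v j i = - v i j)
    -- the braided Hopf algebra structure on `T(V)`:
    (S : BHA k H (TensorAlgebra k V))
    (hmul : S.mul = LinearMap.mul' k (TensorAlgebra k V))
    (hone : S.one = 1)
    (hprim : ∀ w : V, S.comul (TensorAlgebra.ι k w)
      = 1 ⊗ₜ TensorAlgebra.ι k w + TensorAlgebra.ι k w ⊗ₜ 1)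
    (hcounit : ∀ w : V, S.counit (TensorAlgebra.ι k w) = 0)
    (hcoact : ∀ i j : Fin n, i ≠ j →
      S.coact (TensorAlgebra.ι k (v i j)) = e (Equiv.swap i j) ⊗ₜ TensorAlgebra.ι k (v i j))
    (hact : ∀ (σ : Equiv.Perm (Fin n)) (i j : Fin n), i ≠ j →
      S.act (e σ ⊗ₜ TensorAlgebra.ι k (v i j)) = TensorAlgebra.ι k (v (σ i) (σ j))) :
    -- the quadratic Fomin–Kirillov relations are primitive:
    (∀ i j : Fin n, i ≠ j →
      S.comul (TensorAlgebra.ι k (v i j) * TensorAlgebra.ι k (v i j))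
        = (TensorAlgebra.ι k (v i j) * TensorAlgebra.ι k (v i j)) ⊗ₜ 1
          + 1 ⊗ₜ (TensorAlgebra.ι k (v i j) * TensorAlgebra.ι k (v i j))) ∧
    (∀ i j l : Fin n, i ≠ j → j ≠ l → i ≠ l →
      S.comul (TensorAlgebra.ι k (v i j) * TensorAlgebra.ι k (v j l)
          + TensorAlgebra.ι k (v j l) * TensorAlgebra.ι k (v l i)
          + TensorAlgebra.ι k (v l i) * TensorAlgebra.ι k (v i j))
        = (TensorAlgebra.ι k (v i j) * TensorAlgebra.ι k (v j l)
            + TensorAlgebra.ι k (v j l) * TensorAlgebra.ι k (v l i)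
            + TensorAlgebra.ι k (v l i) * TensorAlgebra.ι k (v i j)) ⊗ₜ 1
          + 1 ⊗ₜ (TensorAlgebra.ι k (v i j) * TensorAlgebra.ι k (v j l)
            + TensorAlgebra.ι k (v j l) * TensorAlgebra.ι k (v l i)
            + TensorAlgebra.ι k (v l i) * TensorAlgebra.ι k (v i j))) ∧
    (∀ i j l m : Fin n, i ≠ j → l ≠ m → i ≠ l → i ≠ m → j ≠ l → j ≠ m →
      S.comul (TensorAlgebra.ι k (v i j) * TensorAlgebra.ι k (v l m)
          - TensorAlgebra.ι k (v l m) * TensorAlgebra.ι k (v i j))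
        = (TensorAlgebra.ι k (v i j) * TensorAlgebra.ι k (v l m)
            - TensorAlgebra.ι k (v l m) * TensorAlgebra.ι k (v i j)) ⊗ₜ 1
          + 1 ⊗ₜ (TensorAlgebra.ι k (v i j) * TensorAlgebra.ι k (v l m)
            - TensorAlgebra.ι k (v l m) * TensorAlgebra.ι k (v i j))) := by
  classical
  -- braid on pure tensors
  have hcoact1 : S.coact (1 : TensorAlgebra k V) = (1 : H) ⊗ₜ (1 : TensorAlgebra k V) := by
    rw [← hone]; exact S.coact_one
  have hbraid : ∀ (x y : TensorAlgebra k V) (g : H) (x0 : TensorAlgebra k V),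
      S.coact x = g ⊗ₜ x0 → S.braid (x ⊗ₜ y) = S.act (g ⊗ₜ y) ⊗ₜ x0 := by
    intro x y g x0 h
    rw [S.braid_def]
    simp only [LinearMap.coe_comp, Function.comp_apply, LinearEquiv.coe_coe,
      LinearMap.rTensor_tmul, h, TensorProduct.assoc_tmul, LinearMap.lTensor_tmul,
      TensorProduct.comm_tmul, TensorProduct.assoc_symm_tmul]
  have hmulAA : ∀ (a b c d p q : TensorAlgebra k V), S.braid (b ⊗ₜ c) = p ⊗ₜ q →
      S.mulAA ((a ⊗ₜ b) ⊗ₜ (c ⊗ₜ d)) = (a * p) ⊗ₜ (q * d) := by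
    intro a b c d p q h
    rw [S.mulAA_def]
    simp only [LinearMap.coe_comp, Function.comp_apply, LinearEquiv.coe_coe,
      TensorProduct.assoc_tmul, LinearMap.lTensor_tmul, TensorProduct.assoc_symm_tmul,
      LinearMap.rTensor_tmul, h, TensorProduct.map_tmul, hmul, LinearMap.mul'_apply]
  -- key computation
  have key : ∀ a b c d : Fin n, a ≠ b → c ≠ d →
      S.comul (TensorAlgebra.ι k (v a b) * TensorAlgebra.ι k (v c d))
        = (TensorAlgebra.ι k (v a b) * TensorAlgebra.ι k (v c d)) ⊗ₜ 1
          + 1 ⊗ₜ (TensorAlgebra.ι k (v a b) * TensorAlgebra.ι k (v c d))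
          + TensorAlgebra.ι k (v a b) ⊗ₜ TensorAlgebra.ι k (v c d)
          + TensorAlgebra.ι k (v (Equiv.swap a b c) (Equiv.swap a b d))
              ⊗ₜ TensorAlgebra.ι k (v a b) := by
    intro a b c d hab hcd
    set x := TensorAlgebra.ι k (v a b) with hx
    set y := TensorAlgebra.ι k (v c d) with hy
    have hxy : x * y = S.mul (x ⊗ₜ y) := by simp [hmul]
    have h1 : S.comul (S.mul (x ⊗ₜ y)) = S.mulAA (S.comul x ⊗ₜ S.comul y) := by
      have := LinearMap.congr_fun S.comul_mul (x ⊗ₜ y)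
      simpa using this
    -- the four braid values we need
    have hb11 : S.braid ((1 : TensorAlgebra k V) ⊗ₜ (1 : TensorAlgebra k V))
        = (1 : TensorAlgebra k V) ⊗ₜ (1 : TensorAlgebra k V) := by
      rw [hbraid 1 1 1 1 hcoact1]
      rw [S.act_one']
    have hb1y : S.braid ((1 : TensorAlgebra k V) ⊗ₜ y) = y ⊗ₜ 1 := by
      rw [hbraid 1 y 1 1 hcoact1, S.act_one']
    have hbx1 : S.braid (x ⊗ₜ (1 : TensorAlgebra k V)) = (1 : TensorAlgebra k V) ⊗ₜ x := by
      rw [hbraid x 1 (e (Equiv.swap a b)) x (hcoact a b hab)]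
      rw [← hone, S.act_unit, hεH, one_smul, hone]
    have hbxy : S.braid (x ⊗ₜ y)
        = TensorAlgebra.ι k (v (Equiv.swap a b c) (Equiv.swap a b d)) ⊗ₜ x := by
      rw [hbraid x y (e (Equiv.swap a b)) x (hcoact a b hab), hy, hact _ c d hcd]
    rw [hxy, h1, hprim, hprim, ← hx, ← hy]
    rw [TensorProduct.add_tmul, TensorProduct.tmul_add, TensorProduct.tmul_add]
    rw [map_add, map_add, map_add]
    rw [hmulAA 1 x 1 y 1 x hbx1, hmulAA 1 x y 1 _ x hbxy,
      hmulAA x 1 1 y 1 1 hb11, hmulAA x 1 y 1 y 1 hb1y]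
    simp only [one_mul, mul_one]
    rw [← hxy]
    abel
  have swap_ne : ∀ (a b c d : Fin n), c ≠ d →
      v (Equiv.swap a b c) (Equiv.swap a b d) = v (Equiv.swap a b c) (Equiv.swap a b d) :=
    fun _ _ _ _ _ => rfl
  refine ⟨?_, ?_, ?_⟩
  · intro i j hij
    have h := key i j i j hij hij
    rw [Equiv.swap_apply_left, Equiv.swap_apply_right] at h
    rw [hanti i j hij] at h
    simp only [map_neg, TensorProduct.neg_tmul] at h
    rw [h]; abel
  · intro i j l hij hjl hil
    have h1 := key i j j l hij hjl
    have h2 := key j l l i hjl (Ne.symm hil)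
    have h3 := key l i i j (Ne.symm hil) hij
    rw [Equiv.swap_apply_right, Equiv.swap_apply_of_ne_of_ne (Ne.symm hil) (Ne.symm hjl)] at h1
    rw [Equiv.swap_apply_right, Equiv.swap_apply_of_ne_of_ne hij hil] at h2
    rw [Equiv.swap_apply_right, Equiv.swap_apply_of_ne_of_ne hjl (Ne.symm hij)] at h3
    rw [hanti l i (Ne.symm hil)] at h1
    rw [hanti i j hij] at h2
    rw [hanti j l hjl] at h3
    simp only [map_neg, TensorProduct.neg_tmul] at h1 h2 h3
    rw [map_add, map_add, h1, h2, h3]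
    rw [TensorProduct.add_tmul, TensorProduct.add_tmul, TensorProduct.tmul_add,
      TensorProduct.tmul_add]
    abel
  · intro i j l m hij hlm hil him hjl hjm
    have h1 := key i j l m hij hlm
    have h2 := key l m i j hlm hij
    rw [Equiv.swap_apply_of_ne_of_ne (Ne.symm hil) (Ne.symm hjl),
      Equiv.swap_apply_of_ne_of_ne (Ne.symm him) (Ne.symm hjm)] at h1
    rw [Equiv.swap_apply_of_ne_of_ne hil him,
      Equiv.swap_apply_of_ne_of_ne hjl hjm] at h2
    rw [map_sub, h1, h2]
    rw [TensorProduct.sub_tmul, TensorProduct.tmul_sub]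
    abel
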